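/- Let A be a commutative ring, f ∈ A a non-zero-divisor, A_f the localization at f, and Â = lim A/(f^n) the f-adic completion. Then the A-algebra A_f × Â is faithfully flat-detecting for epimorphisms of finitely presented modules in the following sense: if p : M → N is a map of A-modules such that A_f ⊗_A p and Â ⊗_A p are both surjective, then p is surjective; and if M is a finitely generated A-module with A_f ⊗_A M = 0 and Â ⊗_A M = 0, then M = 0. -/
import Mathlib

open Function TensorProduct

section BLAux

variable {A : Type} [CommRing A] (f : A)
variable {C : Type} [AddCommGroup C] [Module A C]

private lemma bl_kills {n : ℕ} {x : A} (hx : x ∈ (Ideal.span {f} ^ n • ⊤ : Submodule A A))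
    {c : C} (hc : f ^ n • c = 0) : x • c = 0 := by
  refine Submodule.smul_induction_on hx ?_ ?_
  · intro r hr m _
    rw [Ideal.span_singleton_pow, Ideal.mem_span_singleton'] at hr
    obtain ⟨a, rfl⟩ := hr
    have h1 : (a * f ^ n) • m = (a * m) * f ^ n := by rw [smul_eq_mul]; ring
    rw [h1, mul_smul, hc, smul_zero]
  · intro x y hx' hy'
    rw [add_smul, hx', hy', add_zero]

private lemma bl_tors_mono {m n : ℕ} (h : m ≤ n) {c : C} (hc : f ^ m • c = 0) :
    f ^ n • c = 0 := by
  obtain ⟨k, rfl⟩ := Nat.exists_eq_add_of_le h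
  rw [add_comm, pow_add, mul_smul, hc, smul_zero]

private lemma bl_eqsmul {n : ℕ} {x y : A}
    (h : (Submodule.Quotient.mk x : A ⧸ (Ideal.span {f} ^ n • ⊤ : Submodule A A)) =
      Submodule.Quotient.mk y) {c : C} (hc : f ^ n • c = 0) : x • c = y • c := by
  have hxy : x - y ∈ (Ideal.span {f} ^ n • ⊤ : Submodule A A) := (Submodule.Quotient.eq _).mp h
  have h0 := bl_kills f hxy hc
  rw [sub_smul, sub_eq_zero] at h0
  exact h0

/-- A lift to `A` of the `n`-th component of an element of the adic completion. -/
private noncomputable def bl_lft (xh : AdicCompletion (Ideal.span {f}) A) (n : ℕ) : A :=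
  Quotient.out (AdicCompletion.eval (Ideal.span {f}) A n xh)

private lemma bl_mk_lft (xh : AdicCompletion (Ideal.span {f}) A) (n : ℕ) :
    (Submodule.Quotient.mk (bl_lft f xh n) : A ⧸ (Ideal.span {f} ^ n • ⊤ : Submodule A A)) =
      AdicCompletion.eval (Ideal.span {f}) A n xh :=
  Quotient.out_eq _

private lemma bl_step (xh : AdicCompletion (Ideal.span {f}) A) {m n : ℕ} (hmn : m ≤ n)
    {c : C} (hc : f ^ m • c = 0) : bl_lft f xh n • c = bl_lft f xh m • c := by
  refine bl_eqsmul f ?_ hc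
  rw [bl_mk_lft]
  have h1 : AdicCompletion.transitionMap (Ideal.span {f}) A hmn
      (AdicCompletion.eval (Ideal.span {f}) A n xh) =
      AdicCompletion.eval (Ideal.span {f}) A m xh := xh.property hmn
  rw [← h1, ← bl_mk_lft f xh n]
  rfl

variable (htors : ∀ c : C, ∃ n : ℕ, f ^ n • c = 0)
include htors

private noncomputable def bl_deg (c : C) : ℕ := (htors c).choose

private lemma bl_deg_spec (c : C) : f ^ (bl_deg f htors c) • c = 0 := (htors c).choose_spec

private lemma bl_indep (xh : AdicCompletion (Ideal.span {f}) A) {n : ℕ} {c : C}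
    (hc : f ^ n • c = 0) : bl_lft f xh n • c = bl_lft f xh (bl_deg f htors c) • c := by
  rcases le_total n (bl_deg f htors c) with h | h
  · exact (bl_step f xh h hc).symm
  · exact bl_step f xh h (bl_deg_spec f htors c)

/-- The retraction `Â ⊗ C → C` for an `f`-power-torsion module `C`. -/
private noncomputable def bl_retr :
    (AdicCompletion (Ideal.span {f}) A) ⊗[A] C →ₗ[A] C :=
  TensorProduct.lift (LinearMap.mk₂ A (fun xh c => bl_lft f xh (bl_deg f htors c) • c)
    (fun xh yh c => by
      have hmk : (Submodule.Quotient.mk (bl_lft f (xh + yh) (bl_deg f htors c)) :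
          A ⧸ (Ideal.span {f} ^ (bl_deg f htors c) • ⊤ : Submodule A A)) =
          Submodule.Quotient.mk (bl_lft f xh (bl_deg f htors c) +
            bl_lft f yh (bl_deg f htors c)) := by
        rw [bl_mk_lft, map_add, ← bl_mk_lft f xh, ← bl_mk_lft f yh]
        rfl
      rw [bl_eqsmul f hmk (bl_deg_spec f htors c), add_smul])
    (fun a xh c => by
      have hmk : (Submodule.Quotient.mk (bl_lft f (a • xh) (bl_deg f htors c)) :
          A ⧸ (Ideal.span {f} ^ (bl_deg f htors c) • ⊤ : Submodule A A)) =
          Submodule.Quotient.mk (a • bl_lft f xh (bl_deg f htors c)) := by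
        rw [bl_mk_lft, map_smul, ← bl_mk_lft f xh]
        rfl
      rw [bl_eqsmul f hmk (bl_deg_spec f htors c), smul_assoc])
    (fun xh c c' => by
      set K := max (bl_deg f htors c) (bl_deg f htors c') with hK
      have hcK : f ^ K • c = 0 := bl_tors_mono f (le_max_left _ _) (bl_deg_spec f htors c)
      have hc'K : f ^ K • c' = 0 := bl_tors_mono f (le_max_right _ _) (bl_deg_spec f htors c')
      have hsum : f ^ K • (c + c') = 0 := by rw [smul_add, hcK, hc'K, add_zero]
      rw [← bl_indep f htors xh hsum, smul_add, bl_indep f htors xh hcK,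
        bl_indep f htors xh hc'K])
    (fun a xh c => by
      have hac : f ^ (bl_deg f htors c) • (a • c) = 0 := by
        rw [smul_comm, bl_deg_spec f htors c, smul_zero]
      rw [← bl_indep f htors xh hac, smul_comm]))

private lemma bl_retr_one (c : C) :
    bl_retr f htors ((1 : AdicCompletion (Ideal.span {f}) A) ⊗ₜ[A] c) = c := by
  show bl_lft f 1 (bl_deg f htors c) • c = c
  have hmk : (Submodule.Quotient.mk (bl_lft f (1 : AdicCompletion (Ideal.span {f}) A)
      (bl_deg f htors c)) :
      A ⧸ (Ideal.span {f} ^ (bl_deg f htors c) • ⊤ : Submodule A A)) =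
      Submodule.Quotient.mk (1 : A) := by
    rw [bl_mk_lft]
    exact AdicCompletion.val_one _ (bl_deg f htors c)
  rw [bl_eqsmul f hmk (bl_deg_spec f htors c), one_smul]

private lemma bl_key (hsub : Subsingleton ((AdicCompletion (Ideal.span {f}) A) ⊗[A] C)) :
    Subsingleton C := by
  constructor
  intro c c'
  rw [← bl_retr_one f htors c, ← bl_retr_one f htors c',
    Subsingleton.elim ((1 : AdicCompletion (Ideal.span {f}) A) ⊗ₜ[A] c)
      ((1 : AdicCompletion (Ideal.span {f}) A) ⊗ₜ[A] c')]

omit htors in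
private lemma bl_loc_tors
    (hsub : Subsingleton ((Localization (Submonoid.powers f)) ⊗[A] C)) (c : C) :
    ∃ n : ℕ, f ^ n • c = 0 := by
  haveI : IsLocalizedModule (Submonoid.powers f)
      (TensorProduct.mk A (Localization (Submonoid.powers f)) C 1) :=
    (isLocalizedModule_iff_isBaseChange (Submonoid.powers f)
      (Localization (Submonoid.powers f)) _).mpr
      (TensorProduct.isBaseChange A C (Localization (Submonoid.powers f)))
  have h0 : TensorProduct.mk A (Localization (Submonoid.powers f)) C 1 c = 0 :=
    Subsingleton.elim _ _
  obtain ⟨s, hs⟩ := (IsLocalizedModule.eq_zero_iff (Submonoid.powers f) _).mp h0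
  obtain ⟨n, hn⟩ := s.property
  refine ⟨n, ?_⟩
  rw [Submonoid.smul_def, ← hn] at hs
  exact hs

omit htors in
private lemma bl_coker_subsingleton {M N : Type} [AddCommGroup M] [Module A M]
    [AddCommGroup N] [Module A N] (B : Type) [AddCommGroup B] [Module A B]
    (p : M →ₗ[A] N) (h : Surjective (LinearMap.lTensor B p)) :
    Subsingleton (B ⊗[A] (N ⧸ LinearMap.range p)) := by
  have hz : LinearMap.lTensor B ((LinearMap.range p).mkQ) ∘ₗ LinearMap.lTensor B p = 0 := by
    rw [← LinearMap.lTensor_comp]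
    have h0 : (LinearMap.range p).mkQ ∘ₗ p = 0 := by
      ext m
      simp [Submodule.Quotient.mk_eq_zero]
    rw [h0, LinearMap.lTensor_zero]
  have hall : ∀ z : B ⊗[A] (N ⧸ LinearMap.range p), z = 0 := by
    intro z
    obtain ⟨w, hw⟩ := (LinearMap.lTensor_surjective B
      (Submodule.mkQ_surjective (LinearMap.range p))).comp h z
    rw [← hw]
    show (LinearMap.lTensor B ((LinearMap.range p).mkQ) ∘ₗ LinearMap.lTensor B p) w = 0
    rw [hz]
    rfl
  exact ⟨fun x y => by rw [hall x, hall y]⟩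

end BLAux

/-- Beauville–Laszlo faithfulness: for a non-zero-divisor `f ∈ A`, the localization
`A_f` and the `f`-adic completion `Â = lim A/(fⁿ)` jointly detect surjections of
module maps and jointly detect nonzero finitely generated modules. -/
theorem stmt_9 {A : Type} [CommRing A] (f : A) (hf : f ∈ nonZeroDivisors A) :
    (∀ (M N : Type) (_ : AddCommGroup M) (_ : Module A M)
        (_ : AddCommGroup N) (_ : Module A N) (p : M →ₗ[A] N),
      Surjective (LinearMap.lTensor (Localization (Submonoid.powers f)) p) →
      Surjective (LinearMap.lTensor (AdicCompletion (Ideal.span {f}) A) p) →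
      Surjective p) ∧
    (∀ (M : Type) (_ : AddCommGroup M) (_ : Module A M),
      Module.Finite A M →
      Subsingleton ((Localization (Submonoid.powers f)) ⊗[A] M) →
      Subsingleton ((AdicCompletion (Ideal.span {f}) A) ⊗[A] M) →
      Subsingleton M) := by
  constructor
  · intro M N iM mM iN mN p hLoc hAd
    have subL : Subsingleton ((Localization (Submonoid.powers f)) ⊗[A]
        (N ⧸ LinearMap.range p)) := bl_coker_subsingleton _ p hLoc
    have subC : Subsingleton ((AdicCompletion (Ideal.span {f}) A) ⊗[A]
        (N ⧸ LinearMap.range p)) := bl_coker_subsingleton _ p hAd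
    have htors : ∀ c : N ⧸ LinearMap.range p, ∃ n : ℕ, f ^ n • c = 0 :=
      fun c => bl_loc_tors f subL c
    have hC : Subsingleton (N ⧸ LinearMap.range p) := bl_key f htors subC
    intro n
    have h0 : (LinearMap.range p).mkQ n = 0 := Subsingleton.elim _ _
    rw [Submodule.mkQ_apply, Submodule.Quotient.mk_eq_zero] at h0
    exact h0
  · intro M iM mM _ subL subC
    exact bl_key f (fun c => bl_loc_tors f subL c) subC
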